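/- Let H be a monoid with identity e and let T = ⊕_{g ∈ H} T_g be an H-graded ring. If T is right quasi-duo, then the identity component T_e is a right quasi-duo ring. -/
import Mathlib


/-- A ring is right quasi-duo if every maximal right ideal (a coatom in the
lattice of right ideals, i.e. submodules of `R` over `Rᵐᵒᵖ`) is two-sided. -/
def RightQuasiDuo (R : Type*) [Ring R] : Prop :=
  ∀ I : Submodule Rᵐᵒᵖ R, IsCoatom I → ∀ r x : R, x ∈ I → r * x ∈ I

/-- A ring is left quasi-duo if every maximal left ideal is two-sided. -/
def LeftQuasiDuo (R : Type*) [Ring R] : Prop :=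
  ∀ I : Submodule R R, IsCoatom I → ∀ r x : R, x ∈ I → x * r ∈ I

/-- The lattice of right ideals of a ring is coatomic. -/
lemma rightIdeals_isCoatomic (R : Type*) [Ring R] : IsCoatomic (Submodule Rᵐᵒᵖ R) := by
  apply CompleteLattice.coatomic_of_top_compact
  have : (⊤ : Submodule Rᵐᵒᵖ R) = Submodule.span Rᵐᵒᵖ {1} := by
    refine le_antisymm (fun x _ => ?_) le_top
    have : x = (MulOpposite.op x) • (1 : R) := by
      simp [MulOpposite.smul_eq_mul_unop]
    rw [this]
    exact Submodule.smul_mem _ _ (Submodule.subset_span rfl)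
  rw [this]
  exact Submodule.singleton_span_isCompactElement 1

/-- Projection onto the zero component commutes with left multiplication by
a degree-zero element. -/
lemma proj_zero_mul_of_mem_zero {T : Type*} [Ring T] {ι : Type*} [AddMonoid ι] [DecidableEq ι]
    (A : ι → AddSubgroup T) [GradedRing A] {m : T} (hm : m ∈ A 0) (t : T) :
    (DirectSum.decompose A (m * t) 0 : T) = m * (DirectSum.decompose A t 0 : T) := by
  lift m to A 0 using hm
  rw [DirectSum.decompose_mul, DirectSum.decompose_coe]
  exact DirectSum.coe_of_mul_apply_aux A m _ (fun x => by rw [zero_add])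

lemma right_eq_top_of_one_mem {R : Type*} [Ring R] (I : Submodule Rᵐᵒᵖ R)
    (h1 : (1 : R) ∈ I) : I = ⊤ := by
  refine eq_top_iff.mpr fun y _ => ?_
  have := I.smul_mem (MulOpposite.op y) h1
  simpa [MulOpposite.smul_eq_mul_unop] using this

theorem stmt8 (T : Type*) [Ring T] (ι : Type*) [AddMonoid ι] [DecidableEq ι]
    (A : ι → AddSubgroup T) [GradedRing A] (h : RightQuasiDuo T) :
    RightQuasiDuo (A 0) := by
  intro I hI r x hx
  classical
  -- the projection T → A 0
  set π : T → A 0 := fun t => DirectSum.decompose A t 0 with hπ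
  -- the right ideal of T generated by I
  set J : Submodule Tᵐᵒᵖ T :=
    Submodule.span Tᵐᵒᵖ ((fun m : A 0 => (m : T)) '' (I : Set (A 0))) with hJ
  -- every element t of J satisfies π (t * s) ∈ I for all s
  have key : ∀ t ∈ J, ∀ s : T, π (t * s) ∈ I := by
    intro t ht
    refine Submodule.span_induction ?_ ?_ ?_ ?_ ht
    · rintro _ ⟨m, hmI, rfl⟩ s
      have : (π ((m : T) * s) : T) = (m : T) * (π s : T) :=
        proj_zero_mul_of_mem_zero A m.2 s
      have hval : π ((m : T) * s) = m * π s := Subtype.ext this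
      rw [hval]
      have : m * π s = (MulOpposite.op (π s)) • m := by
        simp [MulOpposite.smul_eq_mul_unop]
      rw [this]
      exact Submodule.smul_mem _ _ hmI
    · intro s; simp [hπ]
    · intro a b _ _ ha hb s
      have : (a + b) * s = a * s + b * s := add_mul a b s
      rw [this]
      have : π (a * s + b * s) = π (a * s) + π (b * s) := by
        simp [hπ, DirectSum.decompose_add]
      rw [this]
      exact Submodule.add_mem _ (ha s) (hb s)
    · intro c a _ ha s
      have : (c • a) * s = a * (c.unop * s) := by
        rw [MulOpposite.smul_eq_mul_unop, mul_assoc]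
      rw [this]
      exact ha _
  have key' : ∀ t ∈ J, π t ∈ I := fun t ht => by
    have := key t ht 1
    rwa [mul_one] at this
  -- 1 ∉ J
  have hone : (1 : T) ∉ J := by
    intro h1
    have : π 1 ∈ I := key' 1 h1
    have hpione : π 1 = 1 := by
      apply Subtype.ext
      exact DirectSum.decompose_of_mem_same A SetLike.GradedOne.one_mem
    rw [hpione] at this
    exact hI.1 (right_eq_top_of_one_mem I this)
  have hJne : J ≠ ⊤ := fun hJt => hone (hJt ▸ Submodule.mem_top)
  -- get a maximal right ideal P of T containing J
  have : IsCoatomic (Submodule Tᵐᵒᵖ T) := rightIdeals_isCoatomic T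
  obtain ⟨P, hP, hJP⟩ := (eq_top_or_exists_le_coatom J).resolve_left hJne
  -- coercion of I into P
  have hIP : ∀ m : A 0, m ∈ I → (m : T) ∈ P :=
    fun m hm => hJP (Submodule.subset_span ⟨m, hm, rfl⟩)
  -- r * x ∈ P
  have hrxP : ((r * x : A 0) : T) ∈ P := by
    have : ((r * x : A 0) : T) = (r : T) * (x : T) := rfl
    rw [this]
    exact h P hP (r : T) (x : T) (hIP x hx)
  -- conclude r * x ∈ I by contradiction
  by_contra hrx
  have hsup : I ⊔ Submodule.span ((A 0)ᵐᵒᵖ) {r * x} = ⊤ := by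
    apply hI.2
    refine lt_of_le_of_ne le_sup_left ?_
    intro heq
    exact hrx (heq ▸ Submodule.mem_sup_right (Submodule.subset_span rfl))
  have h1 : (1 : A 0) ∈ I ⊔ Submodule.span ((A 0)ᵐᵒᵖ) {r * x} := by
    rw [hsup]; exact Submodule.mem_top
  obtain ⟨m, hm, z, hz, hmz⟩ := Submodule.mem_sup.mp h1
  obtain ⟨c, rfl⟩ := Submodule.mem_span_singleton.mp hz
  -- now 1 ∈ P, contradiction
  have h1P : (1 : T) ∈ P := by
    have : ((1 : A 0) : T) = (m : T) + ((c • (r * x) : A 0) : T) := by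
      rw [← hmz]; rfl
    have hcoe : ((c • (r * x) : A 0) : T) =
        (MulOpposite.op ((c.unop : A 0) : T)) • ((r * x : A 0) : T) := by
      rw [MulOpposite.smul_eq_mul_unop, MulOpposite.smul_eq_mul_unop]
      rfl
    have hone : (1 : T) = (m : T) + ((c • (r * x) : A 0) : T) := by
      simpa using this
    rw [hone, hcoe]
    exact Submodule.add_mem _ (hIP m hm) (Submodule.smul_mem _ _ hrxP)
  exact hP.1 (right_eq_top_of_one_mem P h1P)
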